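/- arXiv:math/0406227 — 3 statements merged into one kernel-verified Lean document; each statement's English description precedes it below -/
import Mathlib

section
/- Let G be a torsion-free nilpotent group containing an abelian subgroup of finite index. Then G is abelian. -/
/-!
Write `Z_j` for the upper central series. If `⁅a, b⁆` commutes with `a` modulo a normal subgroup,
then `⁅a ^ n, b⁆ ≡ ⁅a, b⁆ ^ n` modulo it. With this identity, induction on `j` shows that in a
torsion-free group an element of `Z_{j+1}` with a positive power in `Z_j` lies in `Z_j`. So if
`a ^ n` commutes with `b`, then `⁅a, b⁆ ∈ Z_{j+1}` gives `⁅a, b⁆ ^ n ∈ Z_j`, hence `⁅a, b⁆ ∈ Z_j`;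
descending from `Z_c = G` yields `⁅a, b⁆ = 1`. Any two elements have positive powers in the abelian
subgroup of finite index, so they commute.
-/

open scoped commutatorElement

section

variable {G : Type*} [Group G]

theorem commutatorElement_pow_left_of_commute {a b : G} (h : Commute ⁅a, b⁆ a) (n : ℕ) :
    ⁅a ^ n, b⁆ = ⁅a, b⁆ ^ n := by
  induction n with
  | zero => simp
  | succ n ih =>
    rw [pow_succ', commutatorElement_mul_left_eq_conj_mul, ih, (h.pow_left n).symm.eq,
      mul_inv_cancel_right, pow_succ]

theorem commutatorElement_pow_left_mem_iff {N : Subgroup G} [N.Normal] {a b : G}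
    (h : ⁅⁅a, b⁆, a⁆ ∈ N) (n : ℕ) : ⁅a ^ n, b⁆ ∈ N ↔ ⁅a, b⁆ ^ n ∈ N := by
  have hcomm : Commute ⁅(a : G ⧸ N), (b : G ⧸ N)⁆ (a : G ⧸ N) := by
    rw [← commutatorElement_eq_one_iff_commute]
    exact (QuotientGroup.eq_one_iff _).2 h
  rw [← QuotientGroup.eq_one_iff, ← QuotientGroup.eq_one_iff (⁅a, b⁆ ^ n)]
  exact Iff.of_eq (congrArg (· = 1) (commutatorElement_pow_left_of_commute hcomm n))

theorem Subgroup.mem_upperCentralSeries_of_pow_mem (htf : ∀ g : G, g ≠ 1 → ¬IsOfFinOrder g)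
    (i : ℕ) {x : G} {n : ℕ} (hn : n ≠ 0) (hx : x ∈ upperCentralSeries G (i + 1))
    (hxn : x ^ n ∈ upperCentralSeries G i) : x ∈ upperCentralSeries G i := by
  induction i generalizing x with
  | zero =>
    rw [upperCentralSeries_zero, mem_bot] at hxn ⊢
    by_contra hx1
    exact htf x hx1 (isOfFinOrder_iff_pow_eq_one.2 ⟨n, Nat.pos_of_ne_zero hn, hxn⟩)
  | succ i ih =>
    rw [mem_upperCentralSeries_succ_iff] at hx hxn ⊢
    intro y
    have hxy := hx y
    rw [mem_upperCentralSeries_succ_iff] at hxy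
    exact ih hxy ((commutatorElement_pow_left_mem_iff (hxy x) n).1 (hxn y))

theorem commute_of_commute_pow_left [Group.IsNilpotent G]
    (htf : ∀ g : G, g ≠ 1 → ¬IsOfFinOrder g) {a b : G} {n : ℕ} (hn : n ≠ 0)
    (h : Commute (a ^ n) b) : Commute a b := by
  obtain ⟨c, hc⟩ := Group.IsNilpotent.nilpotent G
  suffices ∀ j, ⁅a, b⁆ ∈ Subgroup.upperCentralSeries G j → ⁅a, b⁆ = 1 from
    commutatorElement_eq_one_iff_commute.1 (this c (hc ▸ Subgroup.mem_top _))
  intro j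
  induction j with
  | zero => exact Subgroup.mem_bot.1
  | succ j ih =>
    intro hab
    have hpow : ⁅a ^ n, b⁆ ∈ Subgroup.upperCentralSeries G j := by
      rw [commutatorElement_eq_one_iff_commute.2 h]
      exact Subgroup.one_mem _
    have hcentral := (Subgroup.mem_upperCentralSeries_succ_iff.1 hab) a
    exact ih (Subgroup.mem_upperCentralSeries_of_pow_mem htf j hn hab
      ((commutatorElement_pow_left_mem_iff hcentral n).1 hpow))

end

/-- Let `G` be a torsion-free nilpotent group containing an abelian subgroup of
finite index. Then `G` is abelian. -/
theorem torsionFree_nilpotent_abelian_of_finiteIndex_abelian_subgroup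
    {G : Type*} [Group G] [Group.IsNilpotent G]
    (htf : ∀ g : G, g ≠ 1 → ¬IsOfFinOrder g)
    (H : Subgroup G) (hH : IsMulCommutative H) (hfi : H.FiniteIndex) :
    ∀ a b : G, a * b = b * a := by
  have := hH
  intro a b
  obtain ⟨m, hm, -, ham⟩ := H.exists_pow_mem_of_index_ne_zero hfi.index_ne_zero a
  obtain ⟨k, hk, -, hbk⟩ := H.exists_pow_mem_of_index_ne_zero hfi.index_ne_zero b
  have hpows : Commute (a ^ m) (b ^ k) := setLike_mul_comm ham hbk
  have hab_pow : Commute a (b ^ k) := commute_of_commute_pow_left htf hm.ne' hpows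
  exact (commute_of_commute_pow_left htf hk.ne' hab_pow.symm).symm.eq
end

section
/- In a torsion-free nilpotent group, if x^n commutes with y for some positive integer n, then x commutes with y (centralizers are isolated). -/
/-- A monoid is torsion-free if no element besides `1` has finite order
(the definition `Monoid.IsTorsionFree` of the older Mathlib, since removed). -/
def Monoid.IsTorsionFree (G : Type*) [Monoid G] : Prop :=
  ∀ g : G, g ≠ 1 → ¬IsOfFinOrder g

/-!
Write `Zᵢ` for the upper central series. If `⁅x, y⁆ ∈ Zᵢ₊₁`, then `⁅x, y⁆` is central modulo `Zᵢ`,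
so `⁅xⁿ, y⁆ ≡ ⁅x, y⁆ⁿ` modulo `Zᵢ`. Applied to `x ∈ Zᵢ₊₂` with `xⁿ ∈ Zᵢ₊₁`, this shows by induction
on `i` that every factor `Zᵢ₊₁ / Zᵢ` is torsion-free, the case `i = 0` being torsion-freeness of
`G`. Applied to `x` with `⁅xⁿ, y⁆ = 1`, it pushes `⁅x, y⁆` from `Zᵢ₊₁` down to `Zᵢ`; starting from
`Zₖ = G` we reach `Z₀ = 1`.
-/

open scoped commutatorElement

theorem Monoid.IsTorsionFree.eq_one_of_pow_eq_one {M : Type*} [Monoid M]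
    (htf : Monoid.IsTorsionFree M) {g : M} {n : ℕ} (hn : 0 < n) (h : g ^ n = 1) : g = 1 := by
  by_contra hg
  exact htf g hg (isOfFinOrder_iff_pow_eq_one.mpr ⟨n, hn, h⟩)

theorem commutatorElement_pow_left_of_mem_center {K : Type*} [Group K] {a b : K}
    (h : ⁅a, b⁆ ∈ Subgroup.center K) (n : ℕ) : ⁅a ^ n, b⁆ = ⁅a, b⁆ ^ n := by
  induction n with
  | zero => simp
  | succ n ih =>
    calc ⁅a ^ (n + 1), b⁆ = a * (⁅a ^ n, b⁆ * b) * a⁻¹ * b⁻¹ := by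
          simp only [commutatorElement_def]; group
      _ = ⁅a, b⁆ ^ n * ⁅a, b⁆ := by
          have hc : Commute a ⁅a, b⁆ := Subgroup.mem_center_iff.mp h a
          rw [ih, ← mul_assoc, (hc.pow_right n).eq, commutatorElement_def]
          group
      _ = ⁅a, b⁆ ^ (n + 1) := (pow_succ _ n).symm

namespace Subgroup

variable {G : Type*} [Group G]

theorem commutatorElement_pow_mem_of_mem_upperCentralSeriesStep {N : Subgroup G} [N.Normal]
    {x y : G} (n : ℕ)
    (hxy : ⁅x, y⁆ ∈ upperCentralSeriesStep N) (hn : ⁅x ^ n, y⁆ ∈ N) : ⁅x, y⁆ ^ n ∈ N := by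
  rw [upperCentralSeriesStep_eq_comap_center, mem_comap, map_commutatorElement] at hxy
  rw [← QuotientGroup.eq_one_iff] at hn ⊢
  rw [← QuotientGroup.mk'_apply, map_pow, map_commutatorElement,
    ← commutatorElement_pow_left_of_mem_center hxy, ← map_pow, ← map_commutatorElement]
  exact hn

theorem mem_upperCentralSeries_of_pow_mem_s2 (htf : Monoid.IsTorsionFree G) {n : ℕ} (hn : 0 < n)
    (i : ℕ) {g : G} (hg : g ∈ upperCentralSeries G (i + 1))
    (hgn : g ^ n ∈ upperCentralSeries G i) : g ∈ upperCentralSeries G i := by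
  induction i generalizing g with
  | zero =>
    rw [upperCentralSeries_zero, mem_bot] at hgn ⊢
    exact htf.eq_one_of_pow_eq_one hn hgn
  | succ i ih =>
    rw [mem_upperCentralSeries_succ_iff] at hg hgn ⊢
    exact fun y =>
      ih (hg y) (commutatorElement_pow_mem_of_mem_upperCentralSeriesStep n (hg y) (hgn y))

theorem commutatorElement_eq_one_of_mem_upperCentralSeries (htf : Monoid.IsTorsionFree G)
    {x y : G} {n : ℕ} (hn : 0 < n) (hxn : ⁅x ^ n, y⁆ = 1) :
    ∀ i, ⁅x, y⁆ ∈ upperCentralSeries G i → ⁅x, y⁆ = 1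
  | 0, hxy => mem_bot.mp hxy
  | i + 1, hxy =>
    have hxn_mem : ⁅x ^ n, y⁆ ∈ upperCentralSeries G i := hxn ▸ one_mem _
    commutatorElement_eq_one_of_mem_upperCentralSeries htf hn hxn i
      (mem_upperCentralSeries_of_pow_mem_s2 htf hn i hxy
        (commutatorElement_pow_mem_of_mem_upperCentralSeriesStep n hxy hxn_mem))

end Subgroup

/-- In a torsion-free nilpotent group, if `x ^ n` commutes with `y` for some
positive integer `n`, then `x` commutes with `y` (centralizers are isolated). -/
theorem torsionFree_nilpotent_isolated_centralizer
    {G : Type*} [Group G] [Group.IsNilpotent G]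
    (htf : Monoid.IsTorsionFree G)
    (x y : G) (n : ℕ) (hn : 0 < n) (h : x ^ n * y = y * x ^ n) :
    x * y = y * x := by
  have hxn : ⁅x ^ n, y⁆ = 1 := commutatorElement_eq_one_iff_mul_comm.mpr h
  obtain ⟨k, hk⟩ := Group.IsNilpotent.nilpotent G
  have hxy : ⁅x, y⁆ ∈ Subgroup.upperCentralSeries G k := hk ▸ Subgroup.mem_top _
  exact commutatorElement_eq_one_iff_mul_comm.mp
    (Subgroup.commutatorElement_eq_one_of_mem_upperCentralSeries htf hn hxn k hxy)
end

section
/- Let φ : ℤ^m → U(l) be a group homomorphism with finite image. Then there exists a continuous group homomorphism Φ : ℝ^m → U(l) whose restriction to ℤ^m ⊂ ℝ^m equals φ. -/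
/-!
A unitary `u` with finite spectrum (for instance a unitary matrix) is `exp (I • a)` for the
self-adjoint element `a = cfc arg u`; by Lagrange interpolation on the finite spectrum, `a` is a
polynomial in `u`. Hence the logarithms `aᵢ` of the commuting generators `φ (eᵢ)` commute, and
`x ↦ exp (I • ∑ xᵢ aᵢ)` is a continuous homomorphism `ℝ^m → U` agreeing with `φ` on the basis
vectors, hence on all of `ℤ^m`.
-/

open Polynomial selfAdjoint

theorem cfc_mem_adjoin_singleton_of_finite_spectrum {R A : Type*} {p : A → Prop} [Field R]
    [StarRing R] [MetricSpace R] [IsTopologicalSemiring R] [ContinuousStar R] [Ring A]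
    [StarRing A] [TopologicalSpace A] [Algebra R A] [ContinuousFunctionalCalculus R A p]
    {a : A} (ha : (spectrum R a).Finite) (f : R → R) :
    cfc f a ∈ Algebra.adjoin R {a} := by
  by_cases hpa : p a
  · classical
    have hq : cfc f a = aeval a (Lagrange.interpolate ha.toFinset id f) := by
      rw [← cfc_polynomial _ a hpa]
      refine cfc_congr fun z hz => ?_
      simpa using (Lagrange.eval_interpolate_at_node f (Set.injOn_id _)
        (ha.mem_toFinset.mpr hz)).symm
    rw [hq]
    exact aeval_mem_adjoin_singleton R a
  · rw [cfc_apply_of_not_predicate a hpa]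
    exact zero_mem _

theorem AddMonoidHom.pi_int_ext {ι M : Type*} [Finite ι] [DecidableEq ι] [AddMonoid M]
    {f g : (ι → ℤ) →+ M} (h : ∀ i, f (Pi.single i 1) = g (Pi.single i 1)) : f = g := by
  ext v
  induction v using Pi.single_induction with
  | zero => simp
  | add v w hv hw => rw [map_add, map_add, hv, hw]
  | single i n =>
    have hi : f.comp (AddMonoidHom.single (fun _ => ℤ) i) =
        g.comp (AddMonoidHom.single (fun _ => ℤ) i) := AddMonoidHom.ext_int (h i)
    exact DFunLike.congr_fun hi n

section CStarAlgebra

variable {A : Type*} [CStarAlgebra A]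

theorem Unitary.exists_expUnitary_eq_of_finite_spectrum (u : unitary A)
    (hu : (spectrum ℂ (u : A)).Finite) :
    ∃ a : selfAdjoint A, expUnitary a = u ∧ (a : A) ∈ Algebra.adjoin ℂ {(u : A)} := by
  let arg : ℂ → ℂ := fun z => (Complex.arg z : ℂ)
  have hsa : IsSelfAdjoint (cfc arg (u : A)) := by
    rw [IsSelfAdjoint, ← cfc_star]
    exact cfc_congr fun z _ => by simp [arg]
  refine ⟨⟨cfc arg (u : A), hsa⟩, ?_, cfc_mem_adjoin_singleton_of_finite_spectrum hu arg⟩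
  ext
  have harg_cont : ContinuousOn arg (spectrum ℂ (u : A)) := hu.continuousOn arg
  rw [expUnitary_coe, ← cfc_smul Complex.I arg (u : A),
    ← CFC.complex_exp_eq_normedSpace_exp, ← cfc_comp' Complex.exp (Complex.I • arg ·) (u : A)]
  conv_rhs => rw [← cfc_id' ℂ (u : A)]
  refine cfc_congr fun z hz => ?_
  have hz : ‖z‖ = 1 := spectrum.norm_eq_one_of_unitary u.2 hz
  simpa [arg, hz, mul_comm Complex.I] using Complex.norm_mul_exp_arg_mul_I z

theorem exists_continuous_expUnitary_sum {ι : Type*} [Fintype ι] [DecidableEq ι]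
    (a : ι → selfAdjoint A) (ha : ∀ i j, Commute (a i : A) (a j)) :
    ∃ Φ : (ι → ℝ) → unitary A, Continuous Φ ∧ (∀ x y, Φ (x + y) = Φ x * Φ y) ∧
      ∀ i, Φ (Pi.single i 1) = expUnitary (a i) := by
  refine ⟨fun x => expUnitary (∑ i, x i • a i), by fun_prop, fun x y => ?_, fun i => ?_⟩
  · simp only [Pi.add_apply, add_smul, Finset.sum_add_distrib]
    refine Commute.expUnitary_add ?_
    simp only [AddSubgroup.val_finsetSum, selfAdjoint.val_smul]
    exact Commute.sum_left _ _ _ fun i _ => Commute.sum_right _ _ _ fun j _ =>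
      ((ha i j).smul_left _).smul_right _
  · simp [Pi.single_apply]

theorem exists_continuous_real_extension_of_unitary_rep {ι : Type*} [Fintype ι] [DecidableEq ι]
    (φ : (ι → ℤ) → unitary A) (hφ : ∀ x y, φ (x + y) = φ x * φ y)
    (hspec : ∀ i, (spectrum ℂ (φ (Pi.single i 1) : A)).Finite) :
    ∃ Φ : (ι → ℝ) → unitary A, Continuous Φ ∧ (∀ x y, Φ (x + y) = Φ x * Φ y) ∧
      ∀ v : ι → ℤ, Φ (fun i => (v i : ℝ)) = φ v := by
  choose a ha_exp ha_mem using fun i =>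
    Unitary.exists_expUnitary_eq_of_finite_spectrum (φ (Pi.single i 1)) (hspec i)
  have hφ_comm : ∀ x y, Commute (φ x : A) (φ y) := fun x y =>
    congrArg Subtype.val (by rw [← hφ, ← hφ, add_comm] : φ x * φ y = φ y * φ x)
  have ha_comm : ∀ i j, Commute (a i : A) (a j) := fun i j =>
    Algebra.commute_of_mem_adjoin_singleton_of_commute (ha_mem j)
      (Algebra.commute_of_mem_adjoin_singleton_of_commute (ha_mem i) (hφ_comm _ _)).symm
  obtain ⟨Φ, hΦ_cont, hΦ, hΦ_single⟩ := exists_continuous_expUnitary_sum a ha_comm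
  refine ⟨Φ, hΦ_cont, hΦ, fun v => ?_⟩
  have hext : (AddMonoidHom.mk' (Additive.ofMul ∘ Φ) hΦ).comp ((Int.castAddHom ℝ).compLeft ι) =
      AddMonoidHom.mk' (Additive.ofMul ∘ φ) hφ :=
    AddMonoidHom.pi_int_ext fun i => by
      have hcast : (Int.castAddHom ℝ).compLeft ι (Pi.single i 1) = Pi.single i 1 := by
        ext j
        simp [Pi.single_apply]
      change Additive.ofMul (Φ _) = Additive.ofMul (φ _)
      rw [hcast, hΦ_single, ha_exp]
  exact DFunLike.congr_fun hext v

end CStarAlgebra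

open scoped Matrix.Norms.L2Operator

theorem exists_continuous_real_extension_of_finite_image_unitary_rep_general
    {m l : ℕ} (φ : (Fin m → ℤ) → Matrix.unitaryGroup (Fin l) ℂ)
    (hφ : ∀ x y : Fin m → ℤ, φ (x + y) = φ x * φ y) :
    ∃ Φ : (Fin m → ℝ) → Matrix.unitaryGroup (Fin l) ℂ,
      Continuous Φ ∧ (∀ x y : Fin m → ℝ, Φ (x + y) = Φ x * Φ y) ∧
      ∀ v : Fin m → ℤ, Φ (fun i => (v i : ℝ)) = φ v :=
  exists_continuous_real_extension_of_unitary_rep φ hφ fun _ => Matrix.finite_spectrum _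

/-- Let `φ : ℤ^m → U(l)` be a group homomorphism with finite image. Then there
exists a continuous group homomorphism `Φ : ℝ^m → U(l)` whose restriction to
`ℤ^m ⊂ ℝ^m` equals `φ`. -/
theorem exists_continuous_real_extension_of_finite_image_unitary_rep
    {m l : ℕ} (φ : (Fin m → ℤ) → Matrix.unitaryGroup (Fin l) ℂ)
    (hφ : ∀ x y : Fin m → ℤ, φ (x + y) = φ x * φ y)
    (hfin : (Set.range φ).Finite) :
    ∃ Φ : (Fin m → ℝ) → Matrix.unitaryGroup (Fin l) ℂ,
      Continuous Φ ∧ (∀ x y : Fin m → ℝ, Φ (x + y) = Φ x * Φ y) ∧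
      ∀ v : Fin m → ℤ, Φ (fun i => (v i : ℝ)) = φ v :=
  exists_continuous_real_extension_of_finite_image_unitary_rep_general φ hφ
end
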